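/- arXiv:1811.02237 — 3 statements merged into one kernel-verified Lean document; each statement's English description precedes it below -/
import Mathlib

section
/- Assume additionally that all entries of Λ', D and B̃ are integers and that D has rank n over ℚ. Then for every x ∈ ℤ^l the following are equivalent: (i) D·x = 0 and −Λ'·x ∈ 2·ℤ_{≥0}^{l−n} (i.e. every entry of −Λ'·x is a non-negative even integer); (ii) x = B̃·v for some v ∈ ℤ_{≥0}^{l−n}. (Applied to x = b − b', condition (i) is the definition of the dominance relation b ⪰_S b' attached to a seed, so the proposition says that b ⪰_S b' if and only if b − b' = B̃·v for some v ∈ ℤ_{≥0}^{Kex}.) -/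
lemma castMulVec {m k : ℕ} (M : Matrix (Fin m) (Fin k) ℤ) (x : Fin k → ℤ) (i : Fin m) :
    (M.map (fun z : ℤ => (z : ℚ))).mulVec (fun j => (x j : ℚ)) i = ((M.mulVec x i : ℤ) : ℚ) := by
  simp [Matrix.mulVec, dotProduct]

lemma castMulMat {p q r : ℕ} (M : Matrix (Fin p) (Fin q) ℤ) (N : Matrix (Fin q) (Fin r) ℤ) :
    (M * N).map (fun z : ℤ => (z : ℚ)) =
      M.map (fun z : ℤ => (z : ℚ)) * N.map (fun z : ℤ => (z : ℚ)) := by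
  ext i j
  simp [Matrix.mul_apply, Matrix.map_apply]

/-- Let `Λ'`, `D`, `B` be integer matrices of sizes `(l-n)×l`, `n×l`, `l×(l-n)` with
`Λ' * B = -2·1`, `D * B = 0`, and suppose `D` has rank `n` over `ℚ`.  Then for every
`x ∈ ℤ^l` the following are equivalent: (i) `D ⬝ x = 0` and every entry of `-Λ' ⬝ x` is a
non-negative even integer; (ii) `x = B ⬝ v` for some `v ∈ ℤ_{≥0}^{l-n}`. -/
theorem stmt3 (l n : ℕ) (hn : n ≤ l)
    (Λ' : Matrix (Fin (l - n)) (Fin l) ℤ) (D : Matrix (Fin n) (Fin l) ℤ)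
    (B : Matrix (Fin l) (Fin (l - n)) ℤ)
    (hΛ : Λ' * B = (-2 : ℤ) • (1 : Matrix (Fin (l - n)) (Fin (l - n)) ℤ))
    (hD : D * B = 0)
    (hrank : (D.map (fun z : ℤ => (z : ℚ))).rank = n)
    (x : Fin l → ℤ) :
    (D.mulVec x = 0 ∧ ∀ j : Fin (l - n), ∃ m : ℕ, -(Λ'.mulVec x j) = 2 * (m : ℤ)) ↔
    (∃ v : Fin (l - n) → ℤ, (∀ j, 0 ≤ v j) ∧ x = B.mulVec v) := by
  classical
  have hΛBq : (Λ'.map (fun z : ℤ => (z : ℚ))) * (B.map (fun z : ℤ => (z : ℚ))) =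
      (-2 : ℚ) • (1 : Matrix (Fin (l - n)) (Fin (l - n)) ℚ) := by
    ext i j
    rw [← castMulMat, Matrix.map_apply, hΛ]
    simp only [Matrix.smul_apply, Matrix.one_apply, smul_eq_mul]
    by_cases h : i = j <;> simp [h]
  have hDBq : (D.map (fun z : ℤ => (z : ℚ))) * (B.map (fun z : ℤ => (z : ℚ))) = 0 := by
    ext i j
    rw [← castMulMat, Matrix.map_apply, hD]
    simp
  constructor
  · rintro ⟨hx, hpar⟩
    -- kernel of Dq has dimension l - n
    have hkerD : Module.finrank ℚ
        (LinearMap.ker (D.map (fun z : ℤ => (z : ℚ))).mulVecLin) = l - n := by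
      have h1 := LinearMap.finrank_range_add_finrank_ker (D.map (fun z : ℤ => (z : ℚ))).mulVecLin
      have h2 : Module.finrank ℚ (Fin l → ℚ) = l := by simp
      have h3 : Module.finrank ℚ
          (LinearMap.range (D.map (fun z : ℤ => (z : ℚ))).mulVecLin) = n := hrank
      omega
    -- Bq is injective
    have hBker : LinearMap.ker (B.map (fun z : ℤ => (z : ℚ))).mulVecLin = ⊥ := by
      rw [LinearMap.ker_eq_bot']
      intro w hw
      have h1 : (Λ'.map (fun z : ℤ => (z : ℚ))).mulVec
          ((B.map (fun z : ℤ => (z : ℚ))).mulVec w) = 0 := by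
        simpa using congrArg (Λ'.map (fun z : ℤ => (z : ℚ))).mulVec hw
      rw [Matrix.mulVec_mulVec, hΛBq, Matrix.smul_mulVec, Matrix.one_mulVec] at h1
      funext j
      have := congrFun h1 j
      simp only [Pi.smul_apply, smul_eq_mul, Pi.zero_apply] at this ⊢
      linarith
    have hBrange : Module.finrank ℚ
        (LinearMap.range (B.map (fun z : ℤ => (z : ℚ))).mulVecLin) = l - n := by
      have h1 := LinearMap.finrank_range_add_finrank_ker (B.map (fun z : ℤ => (z : ℚ))).mulVecLin
      rw [hBker, finrank_bot] at h1
      have h2 : Module.finrank ℚ (Fin (l - n) → ℚ) = l - n := by simp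
      omega
    have hle : LinearMap.range (B.map (fun z : ℤ => (z : ℚ))).mulVecLin ≤
        LinearMap.ker (D.map (fun z : ℤ => (z : ℚ))).mulVecLin := by
      rintro _ ⟨w, rfl⟩
      simp only [LinearMap.mem_ker, Matrix.mulVecLin_apply, Matrix.mulVec_mulVec, hDBq,
        Matrix.zero_mulVec]
    have heq : LinearMap.range (B.map (fun z : ℤ => (z : ℚ))).mulVecLin =
        LinearMap.ker (D.map (fun z : ℤ => (z : ℚ))).mulVecLin :=
      Submodule.eq_of_le_of_finrank_le hle (by rw [hkerD, hBrange])
    have hxker : (fun i => ((x i : ℤ) : ℚ)) ∈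
        LinearMap.ker (D.map (fun z : ℤ => (z : ℚ))).mulVecLin := by
      rw [LinearMap.mem_ker]
      funext i
      have h := castMulVec D x i
      rw [hx] at h
      simpa using h
    rw [← heq] at hxker
    obtain ⟨w, hw⟩ := hxker
    have hw' : (B.map (fun z : ℤ => (z : ℚ))).mulVec w = fun i => ((x i : ℤ) : ℚ) := hw
    -- define v
    set v : Fin (l - n) → ℤ := fun j => ((hpar j).choose : ℤ) with hv
    have hΛx : ∀ j, ((Λ'.mulVec x j : ℤ) : ℚ) = -2 * w j := by
      intro j
      have h := congrFun (congrArg (Λ'.map (fun z : ℤ => (z : ℚ))).mulVec hw') j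
      rw [Matrix.mulVec_mulVec, hΛBq, Matrix.smul_mulVec, Matrix.one_mulVec] at h
      rw [castMulVec Λ' x j] at h
      rw [← h]
      simp [mul_comm]
    have hwv : ∀ j, w j = (v j : ℚ) := by
      intro j
      have h1 : -(Λ'.mulVec x j) = 2 * v j := by rw [hv]; exact (hpar j).choose_spec
      have h2 := hΛx j
      have h3 : ((Λ'.mulVec x j : ℤ) : ℚ) = -2 * (v j : ℚ) := by
        have h4 : Λ'.mulVec x j = -2 * v j := by linarith
        rw [h4]; push_cast; ring
      rw [h3] at h2
      linarith
    refine ⟨v, fun j => by rw [hv]; positivity, ?_⟩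
    funext i
    have h5 : (x i : ℚ) = ((B.mulVec v i : ℤ) : ℚ) := by
      rw [← castMulVec B v i]
      have h6 : (fun j => (v j : ℚ)) = w := by funext j; rw [hwv j]
      rw [h6]
      exact (congrFun hw' i).symm
    exact_mod_cast h5
  · rintro ⟨v, hv, rfl⟩
    constructor
    · rw [Matrix.mulVec_mulVec, hD, Matrix.zero_mulVec]
    · intro j
      refine ⟨(v j).toNat, ?_⟩
      rw [Matrix.mulVec_mulVec, hΛ, Matrix.smul_mulVec, Matrix.one_mulVec]
      simp only [Pi.smul_apply, smul_eq_mul]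
      rw [Int.toNat_of_nonneg (hv j)]
      ring
end

section
/- Let K be a finite set, k ∈ K, and B = (b_{ij}) a skew-symmetric integer K×K matrix. Then the tropical transformations φ^R_{μ_k(B),k} and φ^R_{B,k} are inverse to each other: φ^R_{μ_k(B),k} ∘ φ^R_{B,k} = id_{ℤ^K} and φ^R_{B,k} ∘ φ^R_{μ_k(B),k} = id_{ℤ^K}. In particular φ^R_{B,k} is a bijection of ℤ^K. -/
/-- Mutation of a skew-symmetric integer `K×K` matrix `B` in direction `k`:
`μ_k(B)_{ij} = -b_{ij}` if `i = k` or `j = k`, and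
`μ_k(B)_{ij} = b_{ij} + (-1)^{δ(b_{ik}<0)} max(b_{ik} b_{kj}, 0)` otherwise. -/
def mutate {K : Type*} [DecidableEq K] (B : Matrix K K ℤ) (k : K) : Matrix K K ℤ :=
  fun i j =>
    if i = k ∨ j = k then -B i j
    else B i j + (if B i k < 0 then -1 else 1) * max (B i k * B k j) 0

/-- The tropical transformation `φ^R_{B,k} : ℤ^K → ℤ^K`:
`g'_k = -g_k`, and for `i ≠ k`, `g'_i = g_i + [b_{ki}]₊ g_k` if `g_k ≥ 0`,
`g'_i = g_i + [b_{ik}]₊ g_k` if `g_k ≤ 0`. -/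
def phiR {K : Type*} [DecidableEq K] (B : Matrix K K ℤ) (k : K) (g : K → ℤ) : K → ℤ :=
  fun i =>
    if i = k then -g k
    else if 0 ≤ g k then g i + max (B k i) 0 * g k
    else g i + max (B i k) 0 * g k

/-!
`φ^R_{B,k}` only sees the `k`-th row and column of `B`, and mutation at `k` merely negates
these; so `φ^R_{μ_k(B),k} = φ^R_{-B,k}`. For `i ≠ k`, `φ^R_{B,k}` adds `[b_{ki}]₊ g_k` or
`[b_{ik}]₊ g_k` according to the sign of `g_k`; since it flips that sign and
`[-b_{ik}]₊ = [b_{ki}]₊` by skew-symmetry, `φ^R_{-B,k}` subtracts exactly the same amount.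
-/

lemma phiR_congr {K : Type*} [DecidableEq K] {B C : Matrix K K ℤ} (k : K)
    (hrow : ∀ i, B k i = C k i) (hcol : ∀ i, B i k = C i k) :
    phiR B k = phiR C k := by
  funext g i
  simp only [phiR, hrow i, hcol i]

lemma phiR_mutate {K : Type*} [DecidableEq K] (B : Matrix K K ℤ) (k : K) :
    phiR (mutate B k) k = phiR (-B) k :=
  phiR_congr k (fun _ => by simp [mutate]) (fun _ => by simp [mutate])

lemma phiR_neg_comp_phiR {K : Type*} [DecidableEq K] {B : Matrix K K ℤ} {k : K}
    (hB : ∀ i, B i k = -B k i) :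
    phiR (-B) k ∘ phiR B k = id := by
  funext g i
  by_cases hik : i = k
  · simp [phiR, hik]
  rcases lt_trichotomy (g k) 0 with hneg | hzero | hpos
  · simp [phiR, hik, hneg.not_ge, hneg.le, hB i]
  · simp [phiR, hik, hzero]
  · simp [phiR, hik, hpos.le, hpos.not_ge, hB i]

theorem stmt5_general {K : Type*} [DecidableEq K] (k : K)
    (B : Matrix K K ℤ) (hskew : ∀ i j, B j i = -B i j) :
    phiR (mutate B k) k ∘ phiR B k = id ∧
    phiR B k ∘ phiR (mutate B k) k = id ∧
    Function.Bijective (phiR B k) := by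
  have hB : ∀ i, B i k = -B k i := hskew k
  have left : phiR (mutate B k) k ∘ phiR B k = id := by
    rw [phiR_mutate]
    exact phiR_neg_comp_phiR hB
  have right : phiR B k ∘ phiR (mutate B k) k = id := by
    rw [phiR_mutate]
    simpa using phiR_neg_comp_phiR (B := -B) (k := k) (by simp [hB])
  exact ⟨left, right, Function.bijective_iff_has_inverse.mpr
    ⟨phiR (mutate B k) k, congrFun left, congrFun right⟩⟩

/-- For a skew-symmetric integer `K×K` matrix `B` and `k ∈ K`, the tropical transformations
`φ^R_{μ_k(B),k}` and `φ^R_{B,k}` are inverse to each other; in particular `φ^R_{B,k}` is a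
bijection of `ℤ^K`. -/
theorem stmt5 {K : Type*} [Fintype K] [DecidableEq K] (k : K)
    (B : Matrix K K ℤ) (hskew : ∀ i j, B j i = -B i j) :
    phiR (mutate B k) k ∘ phiR B k = id ∧
    phiR B k ∘ phiR (mutate B k) k = id ∧
    Function.Bijective (phiR B k) :=
  stmt5_general k B hskew
end

section
/- Let K be a finite set, k ∈ K, and B = (b_{ij}) a skew-symmetric integer K×K matrix. Then the tropical transformations φ^L_{μ_k(B),k} and φ^L_{B,k} are inverse to each other: φ^L_{μ_k(B),k} ∘ φ^L_{B,k} = id_{ℤ^K} and φ^L_{B,k} ∘ φ^L_{μ_k(B),k} = id_{ℤ^K}. In particular φ^L_{B,k} is a bijection of ℤ^K. -/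
/-- The tropical transformation `φ^L_{B,k} : ℤ^K → ℤ^K`:
`g''_k = -g_k`, and for `i ≠ k`, `g''_i = g_i + [b_{ik}]₊ g_k` if `g_k ≥ 0`,
`g''_i = g_i + [b_{ki}]₊ g_k` if `g_k ≤ 0`. -/
def phiL {K : Type*} [DecidableEq K] (B : Matrix K K ℤ) (k : K) (g : K → ℤ) : K → ℤ :=
  fun i =>
    if i = k then -g k
    else if 0 ≤ g k then g i + max (B i k) 0 * g k
    else g i + max (B k i) 0 * g k

lemma key {K : Type*} [DecidableEq K] (k : K) (C D : Matrix K K ℤ)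
    (h1 : ∀ i, D i k = -C i k) (h2 : ∀ i, D k i = -C k i)
    (h3 : ∀ i, C k i = -C i k) (g : K → ℤ) :
    phiL D k (phiL C k g) = g := by
  funext i
  by_cases hik : i = k
  · subst hik; simp [phiL]
  · rcases lt_trichotomy (g k) 0 with h | h | h
    · simp only [phiL, if_pos rfl, if_neg hik, eq_self_iff_true, if_true, neg_neg]
      rw [if_pos (by omega : (0:ℤ) ≤ -g k), if_neg (by omega : ¬ (0:ℤ) ≤ g k),
        h1 i, h3 i]
      ring
    · simp [phiL, hik, h]
    · simp only [phiL, if_pos rfl, if_neg hik, eq_self_iff_true, if_true, neg_neg]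
      rw [if_neg (by omega : ¬ (0:ℤ) ≤ -g k), if_pos (by omega : (0:ℤ) ≤ g k),
        h2 i, h3 i, neg_neg]
      ring

/-- For a skew-symmetric integer `K×K` matrix `B` and `k ∈ K`, the tropical transformations
`φ^L_{μ_k(B),k}` and `φ^L_{B,k}` are inverse to each other; in particular `φ^L_{B,k}` is a
bijection of `ℤ^K`. -/
theorem stmt6 {K : Type*} [Fintype K] [DecidableEq K] (k : K)
    (B : Matrix K K ℤ) (hskew : ∀ i j, B j i = -B i j) :
    phiL (mutate B k) k ∘ phiL B k = id ∧
    phiL B k ∘ phiL (mutate B k) k = id ∧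
    Function.Bijective (phiL B k) := by
  have hm1 : ∀ i, mutate B k i k = -B i k := fun i => by simp [mutate]
  have hm2 : ∀ i, mutate B k k i = -B k i := fun i => by simp [mutate]
  have hL : ∀ g, phiL (mutate B k) k (phiL B k g) = g :=
    key k B (mutate B k) hm1 hm2 (fun i => hskew i k)
  have hR : ∀ g, phiL B k (phiL (mutate B k) k g) = g :=
    key k (mutate B k) B (fun i => by rw [hm1 i, neg_neg])
      (fun i => by rw [hm2 i, neg_neg])
      (fun i => by rw [hm1 i, hm2 i, hskew i k])
  exact ⟨funext hL, funext hR, Function.bijective_iff_has_inverse.2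
    ⟨phiL (mutate B k) k, hL, hR⟩⟩
end
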